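/- arXiv:2005.01083 — 4 statements merged into one kernel-verified Lean document; each statement's English description precedes it below -/
import Mathlib

section
/- Let Φ be a strictly incoherent operation (SIO) on a single qutrit. Fix i ∈ {1, …, 6} and j ∈ {7, 8}, and let ρ be a qutrit density matrix whose Bloch vector t = (t₁, …, t₈) satisfies t_k = 0 for all k ∉ {i, j}. Let m = (m₁, …, m₈) be the Bloch vector of Φ(ρ). Then m_i² ≤ t_i². -/
open Matrix ComplexOrder

/-- A matrix is an incoherent Kraus operator if each column contains at most
one nonzero entry. -/
def IsIncoherentKraus (K : Matrix (Fin 3) (Fin 3) ℂ) : Prop :=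
  ∀ j i₁ i₂, K i₁ j ≠ 0 → K i₂ j ≠ 0 → i₁ = i₂

/-- A matrix is a strictly incoherent Kraus operator if each row and each
column contains at most one nonzero entry. -/
def IsStrictlyIncoherentKraus (K : Matrix (Fin 3) (Fin 3) ℂ) : Prop :=
  IsIncoherentKraus K ∧ IsIncoherentKraus Kᴴ

/-- `Φ` is a strictly incoherent operation (SIO) on a qutrit. -/
def IsSIO (Φ : Matrix (Fin 3) (Fin 3) ℂ → Matrix (Fin 3) (Fin 3) ℂ) : Prop :=
  ∃ (n : ℕ) (K : Fin n → Matrix (Fin 3) (Fin 3) ℂ),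
    (∀ i, IsStrictlyIncoherentKraus (K i)) ∧
    (∑ i, (K i)ᴴ * K i = 1) ∧
    (∀ ρ, Φ ρ = ∑ i, K i * ρ * (K i)ᴴ)

/-- The 3×3 matrix unit with a 1 in row `j`, column `k` (0-indexed). -/
def E (j k : Fin 3) : Matrix (Fin 3) (Fin 3) ℂ := Matrix.single j k 1

/-- The fixed basis of traceless Hermitian 3×3 matrices (Gell-Mann matrices in
the ordering of the paper). -/
noncomputable def gm : Fin 8 → Matrix (Fin 3) (Fin 3) ℂ :=
  ![E 0 1 + E 1 0,
    E 0 2 + E 2 0,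
    E 1 2 + E 2 1,
    (-Complex.I) • (E 0 1 - E 1 0),
    (-Complex.I) • (E 0 2 - E 2 0),
    (-Complex.I) • (E 1 2 - E 2 1),
    Matrix.diagonal ![1, -1, 0],
    ((Real.sqrt 3 : ℂ))⁻¹ • Matrix.diagonal ![1, 1, -2]]

/-- The `i`-th Bloch coordinate of a qutrit state: `tᵢ = Tr(ρ λᵢ)`. -/
noncomputable def bloch (ρ : Matrix (Fin 3) (Fin 3) ℂ) (i : Fin 8) : ℝ :=
  ((ρ * gm i).trace).re

/-! If `ρ` has no coherence besides `ρ p q = conj (ρ q p)`, every incoherent Kraus operator `K`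
satisfies `(K ρ Kᴴ) p q = K p p ρ p q conj (K q q) + K p q ρ q p conj (K q p)`: the diagonal of `ρ`
cannot reach an off-diagonal position. By AM-GM and `∑ Kᴴ K = 1` these coefficients have total
weight at most `1`, so `‖Φ(ρ) p q‖ ≤ ‖ρ p q‖`. The Bloch coordinate `i` and its partner are
`2 Re` and `-2 Im` of one such entry; the support hypothesis kills the partner (and all other
coherences) for `ρ`, so `mᵢ² ≤ 4 ‖Φ(ρ) p q‖² ≤ 4 ‖ρ p q‖² = tᵢ²`. -/

open Finset

section KrausNorms

variable {ι n : Type*} [Fintype ι] [Fintype n] [DecidableEq n]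

lemma sum_sum_norm_sq_col_eq_one {K : ι → Matrix n n ℂ} (hTP : ∑ m, (K m)ᴴ * K m = 1)
    (c : n) : ∑ m, ∑ r, ‖K m r c‖ ^ 2 = 1 := by
  have h := congrFun (congrFun hTP c) c
  simp only [Matrix.sum_apply, Matrix.mul_apply, Matrix.conjTranspose_apply, one_apply_eq,
    RCLike.star_def, Complex.conj_mul'] at h
  exact_mod_cast h

lemma sum_norm_sq_add_norm_sq_le_one {K : ι → Matrix n n ℂ} (hTP : ∑ m, (K m)ᴴ * K m = 1)
    {p q : n} (hpq : p ≠ q) (c : n) : ∑ m, (‖K m p c‖ ^ 2 + ‖K m q c‖ ^ 2) ≤ 1 := by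
  rw [← sum_sum_norm_sq_col_eq_one hTP c]
  refine sum_le_sum fun m _ => ?_
  rw [← sum_pair (f := fun r => ‖K m r c‖ ^ 2) hpq]
  exact sum_le_univ_sum_of_nonneg fun r => by positivity

lemma sum_norm_mul_norm_le_one {K : ι → Matrix n n ℂ} (hTP : ∑ m, (K m)ᴴ * K m = 1)
    {p q : n} (hpq : p ≠ q) :
    ∑ m, (‖K m p p‖ * ‖K m q q‖ + ‖K m p q‖ * ‖K m q p‖) ≤ 1 := by
  have hp := sum_norm_sq_add_norm_sq_le_one hTP hpq p
  have hq := sum_norm_sq_add_norm_sq_le_one hTP hpq q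
  have amgm : ∀ m, 2 * (‖K m p p‖ * ‖K m q q‖ + ‖K m p q‖ * ‖K m q p‖) ≤
      (‖K m p p‖ ^ 2 + ‖K m q p‖ ^ 2) + (‖K m p q‖ ^ 2 + ‖K m q q‖ ^ 2) := fun m => by
    nlinarith [two_mul_le_add_sq ‖K m p p‖ ‖K m q q‖, two_mul_le_add_sq ‖K m p q‖ ‖K m q p‖]
  have hsum : 2 * ∑ m, (‖K m p p‖ * ‖K m q q‖ + ‖K m p q‖ * ‖K m q p‖) ≤
      ∑ m, (‖K m p p‖ ^ 2 + ‖K m q p‖ ^ 2) + ∑ m, (‖K m p q‖ ^ 2 + ‖K m q q‖ ^ 2) := by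
    rw [← sum_add_distrib, mul_sum]
    exact sum_le_sum fun m _ => amgm m
  linarith

end KrausNorms

lemma IsIncoherentKraus.mul_mul_conjTranspose_apply {K ρ : Matrix (Fin 3) (Fin 3) ℂ}
    (hK : IsIncoherentKraus K) {p q : Fin 3} (hpq : p ≠ q)
    (hsupp : ∀ a b, a ≠ b → ρ a b ≠ 0 → (a = p ∧ b = q) ∨ (a = q ∧ b = p)) :
    (K * ρ * Kᴴ) p q = K p p * ρ p q * star (K q q) + K p q * ρ q p * star (K q p) := by
  have hexp : (K * ρ * Kᴴ) p q = ∑ x : Fin 3 × Fin 3, K p x.1 * ρ x.1 x.2 * star (K q x.2) := by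
    simp only [Matrix.mul_apply, conjTranspose_apply, sum_mul, Fintype.sum_prod_type]
    exact sum_comm
  rw [hexp, sum_eq_add_of_mem (p, q) (q, p) (mem_univ _) (mem_univ _) (by simp [hpq])]
  rintro ⟨a, b⟩ - hne
  by_cases hab : a = b
  · subst hab
    by_cases hp : K p a = 0
    · simp [hp]
    by_cases hq : K q a = 0
    · simp [hq]
    exact absurd (hK a p q hp hq) hpq
  · have : ρ a b = 0 := by
      by_contra h
      rcases hsupp a b hab h with ⟨rfl, rfl⟩ | ⟨rfl, rfl⟩ <;> simp_all
    simp [this]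

lemma norm_sum_mul_mul_conjTranspose_apply_le {ι : Type*} [Fintype ι]
    {K : ι → Matrix (Fin 3) (Fin 3) ℂ} (hK : ∀ m, IsIncoherentKraus (K m))
    (hTP : ∑ m, (K m)ᴴ * K m = 1) {ρ : Matrix (Fin 3) (Fin 3) ℂ} (hρ : ρ.IsHermitian)
    {p q : Fin 3} (hpq : p ≠ q)
    (hsupp : ∀ a b, a ≠ b → ρ a b ≠ 0 → (a = p ∧ b = q) ∨ (a = q ∧ b = p)) :
    ‖(∑ m, K m * ρ * (K m)ᴴ) p q‖ ≤ ‖ρ p q‖ := by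
  have hqp : ‖ρ q p‖ = ‖ρ p q‖ := by rw [← hρ.apply q p, norm_star]
  calc ‖(∑ m, K m * ρ * (K m)ᴴ) p q‖
      = ‖∑ m, (K m p p * ρ p q * star (K m q q) + K m p q * ρ q p * star (K m q p))‖ := by
        rw [Matrix.sum_apply]
        simp_rw [(hK _).mul_mul_conjTranspose_apply hpq hsupp]
    _ ≤ ∑ m, ‖K m p p * ρ p q * star (K m q q) + K m p q * ρ q p * star (K m q p)‖ :=
        norm_sum_le _ _
    _ ≤ ∑ m, (‖K m p p‖ * ‖K m q q‖ + ‖K m p q‖ * ‖K m q p‖) * ‖ρ p q‖ := by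
        refine sum_le_sum fun m _ => (norm_add_le _ _).trans (le_of_eq ?_)
        simp only [norm_mul, norm_star, hqp]
        ring
    _ = (∑ m, (‖K m p p‖ * ‖K m q q‖ + ‖K m p q‖ * ‖K m q p‖)) * ‖ρ p q‖ := (sum_mul _ _ _).symm
    _ ≤ ‖ρ p q‖ := mul_le_of_le_one_left (norm_nonneg _) (sum_norm_mul_norm_le_one hTP hpq)

/-- Off-diagonal position `s` is `(offDiagRow s, offDiagCol s)`; the real and imaginary parts of
that entry are read by the Bloch coordinates `blochRe s` and `blochIm s` (the paper's `λ_{s+1}`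
and `λ_{s+4}`). -/
def offDiagRow : Fin 3 → Fin 3 := ![0, 0, 1]
def offDiagCol : Fin 3 → Fin 3 := ![1, 2, 2]
def blochRe : Fin 3 → Fin 8 := ![0, 1, 2]
def blochIm : Fin 3 → Fin 8 := ![3, 4, 5]

lemma offDiagRow_ne_offDiagCol (s : Fin 3) : offDiagRow s ≠ offDiagCol s := by
  revert s; decide

lemma exists_offDiag_eq {a b : Fin 3} (hab : a ≠ b) : ∃ s,
    (offDiagRow s = a ∧ offDiagCol s = b) ∨ (offDiagRow s = b ∧ offDiagCol s = a) := by
  revert a b; decide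

lemma exists_eq_blochRe_or_eq_blochIm {i : Fin 8} (hi : (i : ℕ) < 6) :
    ∃ s, i = blochRe s ∨ i = blochIm s := by
  revert i; decide

lemma blochRe_ne_and_blochIm_ne {s s' : Fin 3} {i : Fin 8} (hs' : s' ≠ s)
    (hs : i = blochRe s ∨ i = blochIm s) : blochRe s' ≠ i ∧ blochIm s' ≠ i := by
  rcases hs with rfl | rfl <;> revert s s' <;> decide

lemma blochRe_lt_six (s : Fin 3) : (blochRe s : ℕ) < 6 := by
  revert s; decide

lemma blochIm_lt_six (s : Fin 3) : (blochIm s : ℕ) < 6 := by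
  revert s; decide

lemma blochRe_ne_blochIm (s : Fin 3) : blochRe s ≠ blochIm s := by
  revert s; decide

section Bloch

variable {A : Matrix (Fin 3) (Fin 3) ℂ}

lemma bloch_blochRe (hA : A.IsHermitian) (s : Fin 3) :
    bloch A (blochRe s) = 2 * (A (offDiagRow s) (offDiagCol s)).re := by
  fin_cases s <;>
  simp [bloch, gm, E, blochRe, offDiagRow, offDiagCol, trace_fin_three, mul_apply,
    single, ← hA.apply 1 0, ← hA.apply 2 0, ← hA.apply 2 1] <;> ring

lemma bloch_blochIm (hA : A.IsHermitian) (s : Fin 3) :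
    bloch A (blochIm s) = -2 * (A (offDiagRow s) (offDiagCol s)).im := by
  fin_cases s <;>
  simp [bloch, gm, E, blochIm, offDiagRow, offDiagCol, trace_fin_three, mul_apply,
    single, ← hA.apply 1 0, ← hA.apply 2 0, ← hA.apply 2 1] <;> ring

lemma bloch_blochRe_sq_add_bloch_blochIm_sq (hA : A.IsHermitian) (s : Fin 3) :
    bloch A (blochRe s) ^ 2 + bloch A (blochIm s) ^ 2 =
      4 * ‖A (offDiagRow s) (offDiagCol s)‖ ^ 2 := by
  rw [bloch_blochRe hA, bloch_blochIm hA, Complex.sq_norm, Complex.normSq_apply]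
  ring

variable {s : Fin 3} {i : Fin 8}

lemma sq_bloch_le (hA : A.IsHermitian) (hs : i = blochRe s ∨ i = blochIm s) :
    bloch A i ^ 2 ≤ 4 * ‖A (offDiagRow s) (offDiagCol s)‖ ^ 2 := by
  rw [← bloch_blochRe_sq_add_bloch_blochIm_sq hA]
  rcases hs with rfl | rfl
  · nlinarith [sq_nonneg (bloch A (blochIm s))]
  · nlinarith [sq_nonneg (bloch A (blochRe s))]

variable (hA : A.IsHermitian) (hs : i = blochRe s ∨ i = blochIm s)
  (hvanish : ∀ k : Fin 8, (k : ℕ) < 6 → k ≠ i → bloch A k = 0)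
include hA hs hvanish

lemma sq_bloch_eq : bloch A i ^ 2 = 4 * ‖A (offDiagRow s) (offDiagCol s)‖ ^ 2 := by
  rw [← bloch_blochRe_sq_add_bloch_blochIm_sq hA]
  rcases hs with rfl | rfl
  · rw [hvanish _ (blochIm_lt_six s) (blochRe_ne_blochIm s).symm]
    ring
  · rw [hvanish _ (blochRe_lt_six s) (blochRe_ne_blochIm s)]
    ring

lemma eq_offDiag_of_apply_ne_zero {a b : Fin 3} (hab : a ≠ b) (hne : A a b ≠ 0) :
    (a = offDiagRow s ∧ b = offDiagCol s) ∨ (a = offDiagCol s ∧ b = offDiagRow s) := by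
  by_contra hnot
  obtain ⟨s', hs'⟩ := exists_offDiag_eq hab
  have hs's : s' ≠ s := by rintro rfl; tauto
  have hzero : A (offDiagRow s') (offDiagCol s') = 0 := by
    obtain ⟨hre, him⟩ := blochRe_ne_and_blochIm_ne hs's hs
    have h := bloch_blochRe_sq_add_bloch_blochIm_sq hA s'
    rw [hvanish _ (blochRe_lt_six s') hre, hvanish _ (blochIm_lt_six s') him] at h
    simpa using h
  rcases hs' with ⟨rfl, rfl⟩ | ⟨rfl, rfl⟩
  · exact hne hzero
  · exact hne (by rw [← hA.apply, hzero, star_zero])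

end Bloch

theorem sio_bloch_condition1_general
    (Φ : Matrix (Fin 3) (Fin 3) ℂ → Matrix (Fin 3) (Fin 3) ℂ) (hΦ : IsSIO Φ)
    (i j : Fin 8) (hi : (i : ℕ) < 6) (hj : 6 ≤ (j : ℕ))
    (ρ : Matrix (Fin 3) (Fin 3) ℂ) (hρ : ρ.PosSemidef)
    (hsupp : ∀ k : Fin 8, k ≠ i → k ≠ j → bloch ρ k = 0) :
    (bloch (Φ ρ) i) ^ 2 ≤ (bloch ρ i) ^ 2 := by
  obtain ⟨n, K, hK, hTP, hrep⟩ := hΦ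
  obtain ⟨s, hs⟩ := exists_eq_blochRe_or_eq_blochIm hi
  have hvanish : ∀ k : Fin 8, (k : ℕ) < 6 → k ≠ i → bloch ρ k = 0 :=
    fun k hk hki => hsupp k hki (by rintro rfl; omega)
  have hΦρ : (Φ ρ).IsHermitian := hrep ρ ▸
    isSelfAdjoint_sum _ fun m _ => isHermitian_mul_mul_conjTranspose _ hρ.1
  have hcoh : ‖Φ ρ (offDiagRow s) (offDiagCol s)‖ ≤ ‖ρ (offDiagRow s) (offDiagCol s)‖ :=
    hrep ρ ▸ norm_sum_mul_mul_conjTranspose_apply_le (fun m => (hK m).1) hTP hρ.1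
      (offDiagRow_ne_offDiagCol s) fun _ _ => eq_offDiag_of_apply_ne_zero hρ.1 hs hvanish
  calc bloch (Φ ρ) i ^ 2 ≤ 4 * ‖Φ ρ (offDiagRow s) (offDiagCol s)‖ ^ 2 := sq_bloch_le hΦρ hs
    _ ≤ 4 * ‖ρ (offDiagRow s) (offDiagCol s)‖ ^ 2 := by gcongr
    _ = bloch ρ i ^ 2 := (sq_bloch_eq hρ.1 hs hvanish).symm

theorem sio_bloch_condition1
    (Φ : Matrix (Fin 3) (Fin 3) ℂ → Matrix (Fin 3) (Fin 3) ℂ) (hΦ : IsSIO Φ)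
    (i j : Fin 8) (hi : (i : ℕ) < 6) (hj : 6 ≤ (j : ℕ))
    (ρ : Matrix (Fin 3) (Fin 3) ℂ) (hρ : ρ.PosSemidef) (htr : ρ.trace = 1)
    (hsupp : ∀ k : Fin 8, k ≠ i → k ≠ j → bloch ρ k = 0) :
    (bloch (Φ ρ) i) ^ 2 ≤ (bloch ρ i) ^ 2 :=
  sio_bloch_condition1_general Φ hΦ i j hi hj ρ hρ hsupp
end

section
/- Let Φ be a strictly incoherent operation (SIO) on a single qutrit. Fix p ∈ {1, 2, 3}, and let ρ be a qutrit density matrix whose Bloch vector t = (t₁, …, t₈) satisfies t_k = 0 for all k ∉ {p, p+3}. Let m = (m₁, …, m₈) be the Bloch vector of Φ(ρ). Then m_p² + m_{p+3}² ≤ t_p² + t_{p+3}². -/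
open Matrix ComplexOrder

/-!
For `p ∈ {1, 2, 3}` the Bloch coordinates `t_p` and `t_{p+3}` of a Hermitian `σ` are
`2 Re σ_jk` and `-2 Im σ_jk` for an off-diagonal position `(j, k)`, so both sides of the
inequality are `4 |·_jk|²`. The support hypothesis kills every off-diagonal entry of `ρ` other
than `ρ_jk` and `ρ_kj`; since a column of an incoherent Kraus operator `K` has at most one nonzero
entry, `(K ρ K†)_jk = K_jj ρ_jk K̄_kk + K_jk ρ_kj K̄_kj`. By AM–GM this is bounded by `|ρ_jk|` times
half the weight of `K` on columns `j` and `k`, and summed over the Kraus operators these weights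
are at most `1` by `∑ K†K = 1`.
-/

open Complex

section KrausEntries

variable {ι κ : Type*} [Fintype ι] [Fintype κ]

lemma sum_normSq_apply_eq_one [DecidableEq ι] {K : κ → Matrix ι ι ℂ}
    (hK : ∑ i, (K i)ᴴ * K i = 1) (c : ι) :
    ∑ i, ∑ r, normSq (K i r c) = 1 := by
  have h := congr_fun (congr_fun hK c) c
  simp only [Matrix.sum_apply, Matrix.mul_apply, Matrix.conjTranspose_apply,
    Matrix.one_apply_eq] at h
  have hℂ : ((∑ i, ∑ r, normSq (K i r c) : ℝ) : ℂ) = 1 := by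
    simpa [Complex.normSq_eq_conj_mul_self] using h
  exact_mod_cast hℂ

lemma mul_mul_conjTranspose_apply_of_support {K ρ : Matrix ι ι ℂ}
    (hK : ∀ c a b, K a c ≠ 0 → K b c ≠ 0 → a = b) {j k : ι} (hjk : j ≠ k)
    (hρ : ∀ a b, a ≠ b → s(a, b) ≠ s(j, k) → ρ a b = 0) :
    (K * ρ * Kᴴ) j k = K j j * ρ j k * star (K k k) + K j k * ρ k j * star (K k j) := by
  have hsum : (K * ρ * Kᴴ) j k = ∑ x : ι × ι, K j x.1 * ρ x.1 x.2 * star (K k x.2) := by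
    simp only [Matrix.mul_apply, Matrix.conjTranspose_apply, Finset.sum_mul,
      Fintype.sum_prod_type]
    rw [Finset.sum_comm]
  rw [hsum, Fintype.sum_eq_add (j, k) (k, j) (by simp [hjk])]
  rintro ⟨a, b⟩ hab
  by_cases hja : K j a = 0
  · simp [hja]
  by_cases hkb : K k b = 0
  · simp [hkb]
  have hab' : a ≠ b := fun h => hjk (hK a j k hja (h ▸ hkb))
  rw [hρ a b hab' (by simpa [Sym2.eq_iff] using hab), mul_zero, zero_mul]

lemma norm_mul_mul_conjTranspose_apply_le {K ρ : Matrix ι ι ℂ}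
    (hK : ∀ c a b, K a c ≠ 0 → K b c ≠ 0 → a = b) (hρh : ρ.IsHermitian)
    {j k : ι} (hjk : j ≠ k)
    (hρ : ∀ a b, a ≠ b → s(a, b) ≠ s(j, k) → ρ a b = 0) :
    ‖(K * ρ * Kᴴ) j k‖ ≤
      ‖ρ j k‖ * ((normSq (K j j) + normSq (K k j)) + (normSq (K k k) + normSq (K j k))) / 2 := by
  have hkj : ‖ρ k j‖ = ‖ρ j k‖ := by rw [← hρh.apply j k, norm_star]
  rw [mul_mul_conjTranspose_apply_of_support hK hjk hρ]
  refine (norm_add_le _ _).trans ?_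
  simp only [norm_mul, norm_star, hkj, ← Complex.sq_norm]
  nlinarith [norm_nonneg (ρ j k), sq_nonneg (‖K j j‖ - ‖K k k‖), sq_nonneg (‖K j k‖ - ‖K k j‖)]

lemma norm_sum_mul_mul_conjTranspose_apply_le_s13 [DecidableEq ι] {K : κ → Matrix ι ι ℂ}
    (hK : ∀ i c a b, K i a c ≠ 0 → K i b c ≠ 0 → a = b) (hsum : ∑ i, (K i)ᴴ * K i = 1)
    {ρ : Matrix ι ι ℂ} (hρh : ρ.IsHermitian) {j k : ι} (hjk : j ≠ k)
    (hρ : ∀ a b, a ≠ b → s(a, b) ≠ s(j, k) → ρ a b = 0) :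
    ‖(∑ i, K i * ρ * (K i)ᴴ) j k‖ ≤ ‖ρ j k‖ := by
  have hcol : ∀ {a b : ι}, a ≠ b → ∑ i, (normSq (K i a a) + normSq (K i b a)) ≤ 1 := by
    intro a b hab
    rw [← sum_normSq_apply_eq_one hsum a]
    exact Finset.sum_le_sum fun i _ =>
      Finset.add_le_sum (f := fun r => normSq (K i r a)) (fun r _ => normSq_nonneg _)
        (Finset.mem_univ _) (Finset.mem_univ _) hab
  calc ‖(∑ i, K i * ρ * (K i)ᴴ) j k‖
      ≤ ∑ i, ‖(K i * ρ * (K i)ᴴ) j k‖ := by rw [Matrix.sum_apply]; exact norm_sum_le _ _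
    _ ≤ ∑ i, ‖ρ j k‖ * ((normSq (K i j j) + normSq (K i k j)) +
          (normSq (K i k k) + normSq (K i j k))) / 2 :=
        Finset.sum_le_sum fun i _ => norm_mul_mul_conjTranspose_apply_le (hK i) hρh hjk hρ
    _ = ‖ρ j k‖ * (∑ i, (normSq (K i j j) + normSq (K i k j)) +
          ∑ i, (normSq (K i k k) + normSq (K i j k))) / 2 := by
        rw [← Finset.sum_div, ← Finset.mul_sum, Finset.sum_add_distrib]
    _ ≤ ‖ρ j k‖ := by nlinarith [norm_nonneg (ρ j k), hcol hjk, hcol hjk.symm]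

end KrausEntries

/-- `λ_{q+1}` and `λ_{q+4}` are supported on the entries `(j, k)` and `(k, j)`, where
`(j, k) = offDiagPair q`. -/
def offDiagPair : Fin 3 → Fin 3 × Fin 3 := ![(0, 1), (0, 2), (1, 2)]

def gmIndex (q : Fin 3) : Fin 8 := q.castLE (by norm_num)

section Bloch

variable {σ : Matrix (Fin 3) (Fin 3) ℂ}

lemma bloch_gmIndex (hσ : σ.IsHermitian) (q : Fin 3) :
    bloch σ (gmIndex q) = 2 * (σ (offDiagPair q).1 (offDiagPair q).2).re := by
  fin_cases q <;>
    simp [bloch, gmIndex, offDiagPair, gm, E, Matrix.trace, Matrix.mul_apply, Fin.sum_univ_three,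
      ← hσ.apply 1 0, ← hσ.apply 2 0, ← hσ.apply 2 1] <;> ring

lemma bloch_gmIndex_add_three (hσ : σ.IsHermitian) (q : Fin 3) :
    bloch σ (gmIndex q + 3) = -2 * (σ (offDiagPair q).1 (offDiagPair q).2).im := by
  fin_cases q <;>
    simp [bloch, gmIndex, offDiagPair, gm, E, Matrix.trace, Matrix.mul_apply, Fin.sum_univ_three,
      ← hσ.apply 1 0, ← hσ.apply 2 0, ← hσ.apply 2 1] <;> ring

lemma bloch_gmIndex_sq_add_sq (hσ : σ.IsHermitian) (q : Fin 3) :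
    bloch σ (gmIndex q) ^ 2 + bloch σ (gmIndex q + 3) ^ 2 =
      4 * normSq (σ (offDiagPair q).1 (offDiagPair q).2) := by
  rw [bloch_gmIndex hσ, bloch_gmIndex_add_three hσ, normSq_apply]
  ring

lemma normSq_apply_eq_of_sym2_eq (hσ : σ.IsHermitian) {a b c d : Fin 3}
    (h : s(a, b) = s(c, d)) : normSq (σ a b) = normSq (σ c d) := by
  rcases Sym2.eq_iff.mp h with ⟨rfl, rfl⟩ | ⟨rfl, rfl⟩
  · rfl
  · rw [← hσ.apply a b, Complex.star_def, normSq_conj]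

lemma exists_sym2_eq_offDiagPair :
    ∀ a b : Fin 3, a ≠ b → ∃ q, s(a, b) = s((offDiagPair q).1, (offDiagPair q).2) := by
  decide

lemma apply_eq_zero_of_bloch_eq_zero (hσ : σ.IsHermitian) (q : Fin 3)
    (h : ∀ k : Fin 8, k ≠ gmIndex q → k ≠ gmIndex q + 3 → bloch σ k = 0) {a b : Fin 3}
    (hab : a ≠ b) (hne : s(a, b) ≠ s((offDiagPair q).1, (offDiagPair q).2)) : σ a b = 0 := by
  obtain ⟨r, hr⟩ := exists_sym2_eq_offDiagPair a b hab
  have hrq : r ≠ q := by rintro rfl; exact hne hr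
  have hidx : ∀ q r : Fin 3, r ≠ q → gmIndex r ≠ gmIndex q ∧ gmIndex r ≠ gmIndex q + 3 ∧
      gmIndex r + 3 ≠ gmIndex q ∧ gmIndex r + 3 ≠ gmIndex q + 3 := by
    decide
  obtain ⟨h₁, h₂, h₃, h₄⟩ := hidx q r hrq
  have := bloch_gmIndex_sq_add_sq hσ r
  rw [h _ h₁ h₂, h _ h₃ h₄, ← normSq_apply_eq_of_sym2_eq hσ hr] at this
  exact normSq_eq_zero.mp (by linarith)

end Bloch

theorem sio_bloch_condition3_general
    (Φ : Matrix (Fin 3) (Fin 3) ℂ → Matrix (Fin 3) (Fin 3) ℂ) (hΦ : IsSIO Φ)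
    (p : Fin 8) (hp : (p : ℕ) < 3)
    (ρ : Matrix (Fin 3) (Fin 3) ℂ) (hρ : ρ.PosSemidef)
    (hsupp : ∀ k : Fin 8, k ≠ p → k ≠ p + 3 → bloch ρ k = 0) :
    (bloch (Φ ρ) p) ^ 2 + (bloch (Φ ρ) (p + 3)) ^ 2 ≤
      (bloch ρ p) ^ 2 + (bloch ρ (p + 3)) ^ 2 := by
  obtain ⟨n, K, hK, hsum, hΦρ⟩ := hΦ
  obtain ⟨q, rfl⟩ : ∃ q : Fin 3, gmIndex q = p := ⟨⟨p, hp⟩, rfl⟩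
  have hρh := hρ.isHermitian
  have hΦh : (Φ ρ).IsHermitian := by
    rw [hΦρ]
    exact isSelfAdjoint_sum _ fun i _ => Matrix.isHermitian_mul_mul_conjTranspose _ hρh
  have hle := norm_sum_mul_mul_conjTranspose_apply_le_s13 (fun i => (hK i).1) hsum hρh
    (by fin_cases q <;> decide) fun _ _ hab hne =>
      apply_eq_zero_of_bloch_eq_zero hρh q hsupp hab hne
  rw [← hΦρ] at hle
  rw [bloch_gmIndex_sq_add_sq hΦh, bloch_gmIndex_sq_add_sq hρh, ← Complex.sq_norm,
    ← Complex.sq_norm]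
  gcongr

theorem sio_bloch_condition3
    (Φ : Matrix (Fin 3) (Fin 3) ℂ → Matrix (Fin 3) (Fin 3) ℂ) (hΦ : IsSIO Φ)
    (p : Fin 8) (hp : (p : ℕ) < 3)
    (ρ : Matrix (Fin 3) (Fin 3) ℂ) (hρ : ρ.PosSemidef) (htr : ρ.trace = 1)
    (hsupp : ∀ k : Fin 8, k ≠ p → k ≠ p + 3 → bloch ρ k = 0) :
    (bloch (Φ ρ) p) ^ 2 + (bloch (Φ ρ) (p + 3)) ^ 2 ≤
      (bloch ρ p) ^ 2 + (bloch ρ (p + 3)) ^ 2 :=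
  sio_bloch_condition3_general Φ hΦ p hp ρ hρ hsupp
end

section
/- Let Φ be a strictly incoherent operation (SIO) on a single qutrit. Fix i, j ∈ {1, …, 6} with i < j and j ≠ i + 3, and let ρ be a qutrit density matrix whose Bloch vector t = (t₁, …, t₈) satisfies t_k = 0 for all k ∉ {i, j}. Let m = (m₁, …, m₈) be the Bloch vector of Φ(ρ). Then (|m_i| + |m_j|)² ≤ (|t_i| + |t_j|)². -/
/-!
The ℓ₁-norm of coherence `C(ρ) = ∑_{a ≠ b} |ρ_ab|` does not increase under an incoherent
operation. In `K ρ K†` the diagonal of `ρ` never reaches an off-diagonal entry, because each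
column of `K` has at most one nonzero entry; for the same reason the ℓ₁- and ℓ₂-norms of a column
agree, so by AM-GM the weight `(∑_a |K_ac|) (∑_b |K_bd|)` that `|ρ_cd|` receives is at most
`(‖K e_c‖² + ‖K e_d‖²) / 2`, which sums to `1` over the Kraus operators since `∑ K†K = 1`.

For a Hermitian qutrit matrix the Bloch coordinates `t_k` and `t_{k+3}` (`k < 3`) are `2 Re` and
`-2 Im` of one off-diagonal entry, so `C(ρ) = ∑_k √(t_k² + t_{k+3}²)`. Hence
`|m_i| + |m_j| ≤ C(Φ ρ) ≤ C(ρ)`, and `C(ρ) = |t_i| + |t_j|` when `t` is supported on two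
coordinates belonging to different entries.
-/

open Matrix ComplexOrder

open Finset

lemma sq_sum_eq_sum_sq_of_subsingleton_support {n : Type*} [Fintype n] {f : n → ℝ}
    (hf : (Function.support f).Subsingleton) : (∑ a, f a) ^ 2 = ∑ a, f a ^ 2 := by
  by_cases h : ∀ a, f a = 0
  · simp [h]
  · obtain ⟨a, ha⟩ := not_forall.mp h
    have hzero : ∀ b ≠ a, f b = 0 := fun b hb => by
      by_contra hfb
      exact hb (hf hfb ha)
    rw [Fintype.sum_eq_single a hzero, Fintype.sum_eq_single a fun b hb => by simp [hzero b hb]]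

section L1Coherence

variable {n ι 𝕜 : Type*} [Fintype n] [Fintype ι] [RCLike 𝕜]

noncomputable def l1Coherence (ρ : Matrix n n 𝕜) : ℝ :=
  ∑ p ∈ (univ : Finset n).offDiag, ‖ρ p.1 p.2‖

lemma l1Coherence_sum_le (X : ι → Matrix n n 𝕜) :
    l1Coherence (∑ m, X m) ≤ ∑ m, l1Coherence (X m) := by
  calc l1Coherence (∑ m, X m)
      = ∑ p ∈ (univ : Finset n).offDiag, ‖∑ m, X m p.1 p.2‖ := by
        simp only [l1Coherence, Matrix.sum_apply]
    _ ≤ ∑ p ∈ (univ : Finset n).offDiag, ∑ m, ‖X m p.1 p.2‖ := by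
        gcongr
        exact norm_sum_le _ _
    _ = ∑ m, l1Coherence (X m) := sum_comm

lemma sum_sum_norm_sq_eq_one [DecidableEq n] {K : ι → Matrix n n 𝕜}
    (hK : ∑ m, (K m)ᴴ * K m = 1) (c : n) :
    ∑ m, ∑ a, ‖K m a c‖ ^ 2 = 1 := by
  have h := congrFun (congrFun hK c) c
  simp only [Matrix.sum_apply, Matrix.mul_apply, Matrix.conjTranspose_apply, RCLike.star_def,
    RCLike.conj_mul, Matrix.one_apply_eq] at h
  exact_mod_cast h

lemma sum_mul_sum_norm_le_one [DecidableEq n] {K : ι → Matrix n n 𝕜}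
    (hcol : ∀ m c a b, K m a c ≠ 0 → K m b c ≠ 0 → a = b) (hK : ∑ m, (K m)ᴴ * K m = 1)
    (c d : n) :
    ∑ m, (∑ a, ‖K m a c‖) * ∑ b, ‖K m b d‖ ≤ 1 := by
  have hsq : ∀ m e, (∑ a, ‖K m a e‖) ^ 2 = ∑ a, ‖K m a e‖ ^ 2 := fun m e =>
    sq_sum_eq_sum_sq_of_subsingleton_support fun a ha b hb =>
      hcol m e a b (norm_ne_zero_iff.mp ha) (norm_ne_zero_iff.mp hb)
  calc ∑ m, (∑ a, ‖K m a c‖) * ∑ b, ‖K m b d‖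
      ≤ ∑ m, ((∑ a, ‖K m a c‖) ^ 2 + (∑ b, ‖K m b d‖) ^ 2) / 2 := by
        gcongr with m
        linarith [two_mul_le_add_sq (∑ a, ‖K m a c‖) (∑ b, ‖K m b d‖)]
    _ = 1 := by
        simp only [hsq, ← sum_div, sum_add_distrib, sum_sum_norm_sq_eq_one hK]
        norm_num

lemma norm_mul_mul_conjTranspose_apply_le_s14 {K : Matrix n n 𝕜}
    (hcol : ∀ c a b, K a c ≠ 0 → K b c ≠ 0 → a = b) (ρ : Matrix n n 𝕜) {a b : n}
    (hab : a ≠ b) :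
    ‖(K * ρ * Kᴴ) a b‖ ≤
      ∑ p ∈ (univ : Finset n).offDiag, ‖K a p.1‖ * ‖ρ p.1 p.2‖ * ‖K b p.2‖ := by
  have hentry : (K * ρ * Kᴴ) a b = ∑ p : n × n, K a p.1 * ρ p.1 p.2 * star (K b p.2) := by
    simp only [Matrix.mul_apply, Matrix.conjTranspose_apply, sum_mul, Fintype.sum_prod_type]
    exact sum_comm
  -- the diagonal terms vanish because column `c` of `K` cannot be nonzero in both rows `a ≠ b`
  have hdiag : ∀ p ∈ univ, p ∉ (univ : Finset n).offDiag →
      K a p.1 * ρ p.1 p.2 * star (K b p.2) = 0 := by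
    rintro ⟨c, d⟩ - hp
    obtain rfl : c = d := by simpa using hp
    by_cases ha : K a c = 0
    · simp [ha]
    · have hb : K b c = 0 := by
        by_contra hb
        exact hab (hcol c a b ha hb)
      simp [hb]
  rw [hentry, ← sum_subset (subset_univ _) hdiag]
  refine (norm_sum_le _ _).trans_eq (sum_congr rfl fun p _ => ?_)
  rw [norm_mul, norm_mul, norm_star]

lemma l1Coherence_mul_mul_conjTranspose_le {K : Matrix n n 𝕜}
    (hcol : ∀ c a b, K a c ≠ 0 → K b c ≠ 0 → a = b) (ρ : Matrix n n 𝕜) :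
    l1Coherence (K * ρ * Kᴴ) ≤ ∑ p ∈ (univ : Finset n).offDiag,
      ‖ρ p.1 p.2‖ * ((∑ a, ‖K a p.1‖) * ∑ b, ‖K b p.2‖) := by
  calc l1Coherence (K * ρ * Kᴴ)
      ≤ ∑ q ∈ (univ : Finset n).offDiag,
          ∑ p ∈ (univ : Finset n).offDiag,
            ‖K q.1 p.1‖ * ‖ρ p.1 p.2‖ * ‖K q.2 p.2‖ :=
        sum_le_sum fun q hq =>
          norm_mul_mul_conjTranspose_apply_le_s14 hcol ρ (mem_offDiag.mp hq).2.2
    _ ≤ ∑ q : n × n,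
          ∑ p ∈ (univ : Finset n).offDiag,
            ‖K q.1 p.1‖ * ‖ρ p.1 p.2‖ * ‖K q.2 p.2‖ :=
        sum_le_sum_of_subset_of_nonneg (subset_univ _) fun _ _ _ => by positivity
    _ = _ := by
        rw [sum_comm]
        refine sum_congr rfl fun p _ => ?_
        rw [Fintype.sum_prod_type, sum_mul_sum, mul_sum]
        refine sum_congr rfl fun a _ => ?_
        rw [mul_sum]
        exact sum_congr rfl fun b _ => by ring

theorem l1Coherence_sum_mul_mul_conjTranspose_le [DecidableEq n] {K : ι → Matrix n n 𝕜}
    (hcol : ∀ m c a b, K m a c ≠ 0 → K m b c ≠ 0 → a = b) (hK : ∑ m, (K m)ᴴ * K m = 1)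
    (ρ : Matrix n n 𝕜) :
    l1Coherence (∑ m, K m * ρ * (K m)ᴴ) ≤ l1Coherence ρ := by
  calc l1Coherence (∑ m, K m * ρ * (K m)ᴴ)
      ≤ ∑ m, l1Coherence (K m * ρ * (K m)ᴴ) := l1Coherence_sum_le _
    _ ≤ ∑ m, ∑ p ∈ (univ : Finset n).offDiag,
          ‖ρ p.1 p.2‖ * ((∑ a, ‖K m a p.1‖) * ∑ b, ‖K m b p.2‖) :=
        sum_le_sum fun m _ => l1Coherence_mul_mul_conjTranspose_le (hcol m) ρ
    _ = ∑ p ∈ (univ : Finset n).offDiag,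
          ‖ρ p.1 p.2‖ * ∑ m, (∑ a, ‖K m a p.1‖) * ∑ b, ‖K m b p.2‖ := by
        rw [sum_comm]
        simp only [mul_sum]
    _ ≤ ∑ p ∈ (univ : Finset n).offDiag, ‖ρ p.1 p.2‖ * 1 := by
        gcongr with p
        exact sum_mul_sum_norm_le_one hcol hK p.1 p.2
    _ = l1Coherence ρ := by simp [l1Coherence]

end L1Coherence

-- `bloch ρ (blochIdx 0 k)` and `bloch ρ (blochIdx 1 k)` are twice the real part and minus twice
-- the imaginary part of the entry of a Hermitian `ρ` at position `offDiagPos k`.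
def blochIdx : Fin 2 → Fin 3 → Fin 8 := ![![0, 1, 2], ![3, 4, 5]]

def offDiagPos : Fin 3 → Fin 3 × Fin 3 := ![(0, 1), (0, 2), (1, 2)]

lemma exists_blochIdx_eq {i : Fin 8} (hi : (i : ℕ) < 6) : ∃ c k, blochIdx c k = i := by
  revert i
  decide

lemma blochIdx_inj {c c' : Fin 2} {k k' : Fin 3} :
    blochIdx c k = blochIdx c' k' ↔ c = c' ∧ k = k' := by
  revert c c' k k'
  decide

lemma val_blochIdx_eq_add_three {c d : Fin 2} {k : Fin 3} (h : blochIdx c k < blochIdx d k) :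
    (blochIdx d k : ℕ) = blochIdx c k + 3 := by
  revert c d k
  decide

lemma bloch_blochIdx_zero (ρ : Matrix (Fin 3) (Fin 3) ℂ) (k : Fin 3) :
    bloch ρ (blochIdx 0 k) =
      (ρ (offDiagPos k).1 (offDiagPos k).2).re + (ρ (offDiagPos k).2 (offDiagPos k).1).re := by
  fin_cases k <;>
    simp [blochIdx, offDiagPos, bloch, gm, E, trace, mul_apply, Fin.sum_univ_three, single]

lemma bloch_blochIdx_one (ρ : Matrix (Fin 3) (Fin 3) ℂ) (k : Fin 3) :
    bloch ρ (blochIdx 1 k) =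
      (ρ (offDiagPos k).2 (offDiagPos k).1).im - (ρ (offDiagPos k).1 (offDiagPos k).2).im := by
  fin_cases k <;>
    simp [blochIdx, offDiagPos, bloch, gm, E, trace, mul_apply, Fin.sum_univ_three, single] <;>
    ring

noncomputable def blochPairNorm (ρ : Matrix (Fin 3) (Fin 3) ℂ) (k : Fin 3) : ℝ :=
  √(bloch ρ (blochIdx 0 k) ^ 2 + bloch ρ (blochIdx 1 k) ^ 2)

lemma Complex.sqrt_sq_add_sq_eq_norm_add_norm_conj (z : ℂ) :
    √((z.re + (starRingEnd ℂ z).re) ^ 2 + ((starRingEnd ℂ z).im - z.im) ^ 2) =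
      ‖z‖ + ‖starRingEnd ℂ z‖ := by
  have h : (z.re + (starRingEnd ℂ z).re) ^ 2 + ((starRingEnd ℂ z).im - z.im) ^ 2 =
      (2 * ‖z‖) ^ 2 := by
    rw [mul_pow, Complex.sq_norm, Complex.normSq_apply, Complex.conj_re, Complex.conj_im]
    ring
  rw [h, Real.sqrt_sq (by positivity), Complex.norm_conj]
  ring

lemma blochPairNorm_eq {ρ : Matrix (Fin 3) (Fin 3) ℂ} (hρ : ρ.IsHermitian) (k : Fin 3) :
    blochPairNorm ρ k =
      ‖ρ (offDiagPos k).1 (offDiagPos k).2‖ + ‖ρ (offDiagPos k).2 (offDiagPos k).1‖ := by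
  rw [blochPairNorm, bloch_blochIdx_zero, bloch_blochIdx_one,
    ← hρ.apply (offDiagPos k).2 (offDiagPos k).1]
  exact Complex.sqrt_sq_add_sq_eq_norm_add_norm_conj _

lemma l1Coherence_eq_sum_blochPairNorm {ρ : Matrix (Fin 3) (Fin 3) ℂ} (hρ : ρ.IsHermitian) :
    l1Coherence ρ = ∑ k, blochPairNorm ρ k := by
  have hoff : (univ : Finset (Fin 3)).offDiag = univ.filter fun p => p.1 ≠ p.2 := by
    ext
    simp
  simp only [blochPairNorm_eq hρ, l1Coherence, hoff, sum_filter, Fintype.sum_prod_type,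
    Fin.sum_univ_three]
  simp [offDiagPos]
  ring

lemma abs_bloch_le_blochPairNorm (ρ : Matrix (Fin 3) (Fin 3) ℂ) (c : Fin 2) (k : Fin 3) :
    |bloch ρ (blochIdx c k)| ≤ blochPairNorm ρ k := by
  apply Real.abs_le_sqrt
  fin_cases c
  · exact le_add_of_nonneg_right (sq_nonneg _)
  · exact le_add_of_nonneg_left (sq_nonneg _)

lemma blochPairNorm_eq_abs {ρ : Matrix (Fin 3) (Fin 3) ℂ} {c : Fin 2} {k : Fin 3}
    (h : bloch ρ (blochIdx (c + 1) k) = 0) : blochPairNorm ρ k = |bloch ρ (blochIdx c k)| := by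
  fin_cases c <;> simp_all [blochPairNorm, Real.sqrt_sq_eq_abs]

lemma sum_blochPairNorm_eq_of_support {ρ : Matrix (Fin 3) (Fin 3) ℂ} {c d : Fin 2} {p q : Fin 3}
    (hpq : p ≠ q) (hsupp : ∀ k, k ≠ blochIdx c p → k ≠ blochIdx d q → bloch ρ k = 0) :
    ∑ r, blochPairNorm ρ r = |bloch ρ (blochIdx c p)| + |bloch ρ (blochIdx d q)| := by
  have hflip : ∀ e : Fin 2, e + 1 ≠ e := by decide
  rw [Fintype.sum_eq_add p q hpq]
  · rw [blochPairNorm_eq_abs (hsupp _ ?_ ?_), blochPairNorm_eq_abs (hsupp _ ?_ ?_)] <;>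
      simp [blochIdx_inj, hflip, hpq, hpq.symm]
  · rintro r ⟨hrp, hrq⟩
    rw [blochPairNorm_eq_abs (c := 0) (hsupp _ ?_ ?_), hsupp _ ?_ ?_, abs_zero] <;>
      simp [blochIdx_inj, hrp, hrq]

theorem sio_bloch_condition4_general
    (Φ : Matrix (Fin 3) (Fin 3) ℂ → Matrix (Fin 3) (Fin 3) ℂ) (hΦ : IsSIO Φ)
    (i j : Fin 8) (hi : (i : ℕ) < 6) (hj : (j : ℕ) < 6)
    (hij : i < j) (hne : (j : ℕ) ≠ (i : ℕ) + 3)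
    (ρ : Matrix (Fin 3) (Fin 3) ℂ) (hρ : ρ.PosSemidef)
    (hsupp : ∀ k : Fin 8, k ≠ i → k ≠ j → bloch ρ k = 0) :
    (|bloch (Φ ρ) i| + |bloch (Φ ρ) j|) ^ 2 ≤ (|bloch ρ i| + |bloch ρ j|) ^ 2 := by
  obtain ⟨n, K, hK, hcomplete, hΦρ⟩ := hΦ
  obtain ⟨c, p, rfl⟩ := exists_blochIdx_eq hi
  obtain ⟨d, q, rfl⟩ := exists_blochIdx_eq hj
  have hpq : p ≠ q := by
    rintro rfl
    exact hne (val_blochIdx_eq_add_three hij)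
  have hΦρ_herm : (Φ ρ).IsHermitian := by
    rw [hΦρ]
    exact isSelfAdjoint_sum _ fun m _ => isHermitian_mul_mul_conjTranspose _ hρ.isHermitian
  have hmono : l1Coherence (Φ ρ) ≤ l1Coherence ρ := by
    rw [hΦρ]
    exact l1Coherence_sum_mul_mul_conjTranspose_le (fun m => (hK m).1) hcomplete ρ
  gcongr ?_ ^ 2
  calc |bloch (Φ ρ) (blochIdx c p)| + |bloch (Φ ρ) (blochIdx d q)|
      ≤ blochPairNorm (Φ ρ) p + blochPairNorm (Φ ρ) q :=
        add_le_add (abs_bloch_le_blochPairNorm _ c p) (abs_bloch_le_blochPairNorm _ d q)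
    _ ≤ ∑ r, blochPairNorm (Φ ρ) r :=
        add_le_sum (fun _ _ => Real.sqrt_nonneg _) (mem_univ p) (mem_univ q) hpq
    _ = l1Coherence (Φ ρ) := (l1Coherence_eq_sum_blochPairNorm hΦρ_herm).symm
    _ ≤ l1Coherence ρ := hmono
    _ = ∑ r, blochPairNorm ρ r := l1Coherence_eq_sum_blochPairNorm hρ.isHermitian
    _ = |bloch ρ (blochIdx c p)| + |bloch ρ (blochIdx d q)| :=
        sum_blochPairNorm_eq_of_support hpq hsupp

theorem sio_bloch_condition4
    (Φ : Matrix (Fin 3) (Fin 3) ℂ → Matrix (Fin 3) (Fin 3) ℂ) (hΦ : IsSIO Φ)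
    (i j : Fin 8) (hi : (i : ℕ) < 6) (hj : (j : ℕ) < 6)
    (hij : i < j) (hne : (j : ℕ) ≠ (i : ℕ) + 3)
    (ρ : Matrix (Fin 3) (Fin 3) ℂ) (hρ : ρ.PosSemidef) (htr : ρ.trace = 1)
    (hsupp : ∀ k : Fin 8, k ≠ i → k ≠ j → bloch ρ k = 0) :
    (|bloch (Φ ρ) i| + |bloch (Φ ρ) j|) ^ 2 ≤ (|bloch ρ i| + |bloch ρ j|) ^ 2 :=
  sio_bloch_condition4_general Φ hΦ i j hi hj hij hne ρ hρ hsupp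
end

section
/- Let a₁, a₂, a₃, a₄, a₅ ∈ ℝ and b₁, b₂, b₃, b₄ ∈ ℂ, and define the 2×2 matrices K₁ = [[a₁, b₁], [0, 0]], K₂ = [[0, 0], [a₂, b₂]], K₃ = [[a₃, 0], [0, b₃]], K₄ = [[0, b₄], [a₄, 0]], K₅ = [[a₅, 0], [0, 0]] (the canonical five-operator form of a qubit incoherent operation). Then there exist 2×2 complex matrices L₁, L₂, L₃, L₄, with L₁ supported on the entries (1,1) and (1,2), L₂ supported on the entries (2,1) and (2,2), L₃ supported on the entries (1,1) and (2,2), and L₄ supported on the entries (1,2) and (2,1) (in particular all four incoherent Kraus operators), such that ∑ₖ₌₁⁵ Kₖ ρ Kₖ† = ∑ₖ₌₁⁴ Lₖ ρ Lₖ† for all ρ ∈ M₂(ℂ). -/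
open Matrix

/-- `L` is supported on the set `S` of (row, column) positions: every entry of
`L` outside `S` vanishes. -/
def SupportedOn (L : Matrix (Fin 2) (Fin 2) ℂ) (S : Set (Fin 2 × Fin 2)) : Prop :=
  ∀ p q, L p q ≠ 0 → (p, q) ∈ S

/-!
Writing `L₁ = !![x, y; 0, 0]`, `L₂ = !![0, 0; z, w]`, `L₃ = !![u, 0; 0, v]`,
`L₄ = !![0, t; s, 0]`, the two channels agree as soon as eight coefficient identities hold: four
fix the products `x * conj y`, `v * conj u`, `t * conj s`, `z * conj w`, and four fix sums of
squared moduli, e.g. `‖x‖² + ‖u‖² = a₁² + a₃² + a₅²`. Once the squared moduli are known,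
phases realizing the products always exist. The moduli satisfy a
cyclic system `X → Y → T → S → Z → W → V → U → X` alternating a product and a sum constraint;
solving it around the cycle expresses `X` as the value at `X` of a continuous self-map of
`[a₁², a₁² + a₃² + a₅²]`, which has a fixed point by the intermediate value theorem.
-/

open Set ComplexConjugate

/-- If `p * q = a * b` and `q + r = b + c`, then `r = partnerStep a b c p`. It is only used
for `p ≥ a ≥ 0`, where `p = 0` forces `a = 0` and the junk value `a * b / 0 = 0` is the right
quotient. -/
noncomputable def partnerStep (a b c p : ℝ) : ℝ := b + c - a * b / p

lemma mul_div_cancel_of_le {a p : ℝ} (b : ℝ) (ha : 0 ≤ a) (hp : a ≤ p) :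
    p * (a * b / p) = a * b := by
  rcases ha.eq_or_lt with rfl | ha
  · simp
  · exact mul_div_cancel₀ _ (ha.trans_le hp).ne'

section PartnerStep

variable {a b : ℝ} (c : ℝ)

lemma continuousOn_partnerStep (ha : 0 ≤ a) : ContinuousOn (partnerStep a b c) (Ici a) := by
  rcases ha.eq_or_lt with rfl | ha
  · have : partnerStep 0 b c = fun _ => b + c := by ext; simp [partnerStep]
    exact this ▸ continuousOn_const
  · exact continuousOn_const.sub <| continuousOn_const.div continuousOn_id
      fun p hp => (ha.trans_le hp).ne'

lemma mapsTo_partnerStep (ha : 0 ≤ a) (hb : 0 ≤ b) :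
    MapsTo (partnerStep a b c) (Ici a) (Icc c (b + c)) := by
  intro p (hp : a ≤ p)
  have hp0 : 0 ≤ p := ha.trans hp
  have hle : a * b / p ≤ b := div_le_of_le_mul₀ hp0 hb (by nlinarith)
  have hnn : 0 ≤ a * b / p := div_nonneg (mul_nonneg ha hb) hp0
  constructor <;> simp only [partnerStep] <;> linarith

end PartnerStep

lemma exists_cyclic_magnitudes {α₁ α₂ α₃ α₄ ε β₁ β₂ β₃ β₄ : ℝ}
    (hα₁ : 0 ≤ α₁) (hα₂ : 0 ≤ α₂) (hα₃ : 0 ≤ α₃) (hα₄ : 0 ≤ α₄) (hε : 0 ≤ ε)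
    (hβ₁ : 0 ≤ β₁) (hβ₂ : 0 ≤ β₂) (hβ₃ : 0 ≤ β₃) (hβ₄ : 0 ≤ β₄) :
    ∃ X Y T S Z W V U : ℝ,
      0 ≤ X ∧ 0 ≤ Y ∧ 0 ≤ T ∧ 0 ≤ S ∧ 0 ≤ Z ∧ 0 ≤ W ∧ 0 ≤ V ∧ 0 ≤ U ∧
      X * Y = α₁ * β₁ ∧ T * S = β₄ * α₄ ∧ Z * W = α₂ * β₂ ∧ V * U = β₃ * α₃ ∧
      X + U = α₁ + α₃ + ε ∧ Y + T = β₁ + β₄ ∧ Z + S = α₂ + α₄ ∧ W + V = β₂ + β₃ := by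
  have h₁ := mapsTo_partnerStep β₄ hα₁ hβ₁
  have h₂ := mapsTo_partnerStep α₂ hβ₄ hα₄
  have h₃ := mapsTo_partnerStep β₃ hα₂ hβ₂
  have h₄ := mapsTo_partnerStep (α₁ + ε) hβ₃ hα₃
  set F := partnerStep β₃ α₃ (α₁ + ε) ∘ partnerStep α₂ β₂ β₃ ∘
    partnerStep β₄ α₄ α₂ ∘ partnerStep α₁ β₁ β₄
  have hmaps : MapsTo F (Icc α₁ (α₃ + (α₁ + ε))) (Icc α₁ (α₃ + (α₁ + ε))) :=
    ((((h₄.mono_right (Icc_subset_Icc (by linarith) le_rfl)).comp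
      (h₃.mono_right Icc_subset_Ici_self)).comp (h₂.mono_right Icc_subset_Ici_self)).comp
      (h₁.mono_right Icc_subset_Ici_self)).mono_left Icc_subset_Ici_self
  have hcont : ContinuousOn F (Icc α₁ (α₃ + (α₁ + ε))) :=
    ((((continuousOn_partnerStep _ hβ₃).comp (continuousOn_partnerStep _ hα₂)
      (h₃.mono_right Icc_subset_Ici_self)).comp (continuousOn_partnerStep _ hβ₄)
      (h₂.mono_right Icc_subset_Ici_self)).comp (continuousOn_partnerStep _ hα₁)
      (h₁.mono_right Icc_subset_Ici_self)).mono Icc_subset_Ici_self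
  obtain ⟨X, hX, hFX⟩ := exists_mem_Icc_isFixedPt_of_mapsTo hcont (by linarith) hmaps
  set T := partnerStep α₁ β₁ β₄ X
  set Z := partnerStep β₄ α₄ α₂ T
  set V := partnerStep α₂ β₂ β₃ Z
  have hT : β₄ ≤ T := (h₁ hX.1).1
  have hZ : α₂ ≤ Z := (h₂ hT).1
  have hV : β₃ ≤ V := (h₃ hZ).1
  have hX0 : 0 ≤ X := hα₁.trans hX.1
  have hT0 : 0 ≤ T := hβ₄.trans hT
  have hZ0 : 0 ≤ Z := hα₂.trans hZ
  have hV0 : 0 ≤ V := hβ₃.trans hV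
  refine ⟨X, α₁ * β₁ / X, T, β₄ * α₄ / T, Z, α₂ * β₂ / Z, V, β₃ * α₃ / V,
    hX0, by positivity, hT0, by positivity, hZ0, by positivity, hV0, by positivity,
    mul_div_cancel_of_le _ hα₁ hX.1, mul_div_cancel_of_le _ hβ₄ hT,
    mul_div_cancel_of_le _ hα₂ hZ, mul_div_cancel_of_le _ hβ₃ hV, ?_, ?_, ?_, ?_⟩
  · have : partnerStep β₃ α₃ (α₁ + ε) V = X := hFX
    simp only [partnerStep] at this
    linarith
  all_goals simp only [T, Z, V, partnerStep]; ring

lemma Complex.exists_mul_conj_eq (c : ℂ) {X Y : ℝ} (hX : 0 ≤ X) (hY : 0 ≤ Y)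
    (h : X * Y = ‖c‖ ^ 2) : ∃ x y : ℂ, ‖x‖ ^ 2 = X ∧ ‖y‖ ^ 2 = Y ∧ x * conj y = c := by
  refine ⟨√X * Complex.exp (c.arg * Complex.I), √Y, ?_, ?_, ?_⟩
  · rw [norm_mul, Complex.norm_exp_ofReal_mul_I, mul_one, Complex.norm_real, Real.norm_eq_abs,
      sq_abs, Real.sq_sqrt hX]
  · rw [Complex.norm_real, Real.norm_eq_abs, sq_abs, Real.sq_sqrt hY]
  · have : √X * √Y = ‖c‖ := by rw [← Real.sqrt_mul hX, h, Real.sqrt_sq (norm_nonneg c)]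
    rw [Complex.conj_ofReal, mul_right_comm, ← Complex.ofReal_mul, this,
      Complex.norm_mul_exp_arg_mul_I]

lemma five_kraus_eq_four_kraus {a₁ a₂ a₃ a₄ a₅ : ℝ} {b₁ b₂ b₃ b₄ x y z w u v t s : ℂ}
    (h₁ : ‖x‖ ^ 2 + ‖u‖ ^ 2 = a₁ ^ 2 + a₃ ^ 2 + a₅ ^ 2) (h₂ : x * conj y = a₁ * conj b₁)
    (h₃ : ‖y‖ ^ 2 + ‖t‖ ^ 2 = ‖b₁‖ ^ 2 + ‖b₄‖ ^ 2) (h₄ : v * conj u = a₃ * b₃)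
    (h₅ : t * conj s = b₄ * a₄) (h₆ : ‖z‖ ^ 2 + ‖s‖ ^ 2 = a₂ ^ 2 + a₄ ^ 2)
    (h₇ : z * conj w = a₂ * conj b₂) (h₈ : ‖w‖ ^ 2 + ‖v‖ ^ 2 = ‖b₂‖ ^ 2 + ‖b₃‖ ^ 2)
    (ρ : Matrix (Fin 2) (Fin 2) ℂ) :
    !![(a₁ : ℂ), b₁; 0, 0] * ρ * !![(a₁ : ℂ), b₁; 0, 0]ᴴ +
      !![0, 0; (a₂ : ℂ), b₂] * ρ * !![0, 0; (a₂ : ℂ), b₂]ᴴ +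
      !![(a₃ : ℂ), 0; 0, b₃] * ρ * !![(a₃ : ℂ), 0; 0, b₃]ᴴ +
      !![0, b₄; (a₄ : ℂ), 0] * ρ * !![0, b₄; (a₄ : ℂ), 0]ᴴ +
      !![(a₅ : ℂ), 0; 0, 0] * ρ * !![(a₅ : ℂ), 0; 0, 0]ᴴ =
    !![x, y; 0, 0] * ρ * !![x, y; 0, 0]ᴴ + !![0, 0; z, w] * ρ * !![0, 0; z, w]ᴴ +
      !![u, 0; 0, v] * ρ * !![u, 0; 0, v]ᴴ + !![0, t; s, 0] * ρ * !![0, t; s, 0]ᴴ := by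
  have sq_norm (q : ℂ) : (‖q‖ ^ 2 : ℂ) = q * conj q := (Complex.mul_conj' q).symm
  have e₁ := congrArg ((↑) : ℝ → ℂ) h₁
  have e₃ := congrArg ((↑) : ℝ → ℂ) h₃
  have e₆ := congrArg ((↑) : ℝ → ℂ) h₆
  have e₈ := congrArg ((↑) : ℝ → ℂ) h₈
  push_cast [sq_norm] at e₁ e₃ e₆ e₈
  have c₂ : conj x * y = a₁ * b₁ := by simpa [mul_comm] using congrArg conj h₂
  have c₄ : conj v * u = a₃ * conj b₃ := by simpa [mul_comm] using congrArg conj h₄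
  have c₅ : conj t * s = a₄ * conj b₄ := by simpa [mul_comm] using congrArg conj h₅
  have c₇ : conj z * w = a₂ * b₂ := by simpa [mul_comm] using congrArg conj h₇
  ext i j
  fin_cases i <;> fin_cases j <;>
    simp only [Matrix.add_apply, mul_apply, conjTranspose_apply, Fin.sum_univ_two] <;> simp
  · linear_combination -(ρ 0 0 * e₁) - ρ 0 1 * h₂ - ρ 1 0 * c₂ - ρ 1 1 * e₃
  · linear_combination -(ρ 0 1 * c₄) - ρ 1 0 * h₅
  · linear_combination -(ρ 1 0 * h₄) - ρ 0 1 * c₅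
  · linear_combination -(ρ 0 0 * e₆) - ρ 0 1 * h₇ - ρ 1 0 * c₇ - ρ 1 1 * e₈

theorem qubit_five_to_four (a₁ a₂ a₃ a₄ a₅ : ℝ) (b₁ b₂ b₃ b₄ : ℂ) :
    ∃ L₁ L₂ L₃ L₄ : Matrix (Fin 2) (Fin 2) ℂ,
      SupportedOn L₁ {(0, 0), (0, 1)} ∧
      SupportedOn L₂ {(1, 0), (1, 1)} ∧
      SupportedOn L₃ {(0, 0), (1, 1)} ∧
      SupportedOn L₄ {(0, 1), (1, 0)} ∧
      ∀ ρ : Matrix (Fin 2) (Fin 2) ℂ,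
        !![(a₁ : ℂ), b₁; 0, 0] * ρ * !![(a₁ : ℂ), b₁; 0, 0]ᴴ +
        !![0, 0; (a₂ : ℂ), b₂] * ρ * !![0, 0; (a₂ : ℂ), b₂]ᴴ +
        !![(a₃ : ℂ), 0; 0, b₃] * ρ * !![(a₃ : ℂ), 0; 0, b₃]ᴴ +
        !![0, b₄; (a₄ : ℂ), 0] * ρ * !![0, b₄; (a₄ : ℂ), 0]ᴴ +
        !![(a₅ : ℂ), 0; 0, 0] * ρ * !![(a₅ : ℂ), 0; 0, 0]ᴴ =
        L₁ * ρ * L₁ᴴ + L₂ * ρ * L₂ᴴ + L₃ * ρ * L₃ᴴ + L₄ * ρ * L₄ᴴ := by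
  obtain ⟨X, Y, T, S, Z, W, V, U, hX, hY, hT, hS, hZ, hW, hV, hU,
      hXY, hTS, hZW, hVU, hXU, hYT, hZS, hWV⟩ :=
    exists_cyclic_magnitudes (sq_nonneg a₁) (sq_nonneg a₂) (sq_nonneg a₃) (sq_nonneg a₄)
      (sq_nonneg a₅) (sq_nonneg ‖b₁‖) (sq_nonneg ‖b₂‖) (sq_nonneg ‖b₃‖) (sq_nonneg ‖b₄‖)
  obtain ⟨x, y, rfl, rfl, hxy⟩ := Complex.exists_mul_conj_eq (a₁ * conj b₁) hX hY (by
    simp [hXY, mul_pow])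
  obtain ⟨t, s, rfl, rfl, hts⟩ := Complex.exists_mul_conj_eq (b₄ * a₄) hT hS (by
    simp [hTS, mul_pow])
  obtain ⟨z, w, rfl, rfl, hzw⟩ := Complex.exists_mul_conj_eq (a₂ * conj b₂) hZ hW (by
    simp [hZW, mul_pow])
  obtain ⟨v, u, rfl, rfl, hvu⟩ := Complex.exists_mul_conj_eq (a₃ * b₃) hV hU (by
    simp [hVU, mul_pow, mul_comm])
  refine ⟨!![x, y; 0, 0], !![0, 0; z, w], !![u, 0; 0, v], !![0, t; s, 0], ?_, ?_, ?_, ?_,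
    five_kraus_eq_four_kraus hXU hxy hYT hvu hts hZS hzw hWV⟩
  all_goals intro p q h; fin_cases p <;> fin_cases q <;> simp_all
end
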